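/- arXiv:2209.13208 — 4 statements merged into one kernel-verified Lean document; each statement's English description precedes it below -/
import Mathlib

section
/- If real numbers d, m_0, m_1, m_2, m_3 satisfy m_i ≥ 0 for all i and d ≥ m_i + m_j for all i ≠ j, then the vector dH − Σ_i m_i E_i is a nonnegative real linear combination of the ten boundary classes. (This is the numerical core of the paper's Theorem 1.3 for n = 5.) -/
open Finset

/-- Index type for the basis `H, E_0, E_1, E_2, E_3` of `Pic(M̄₀,₅) ⊗ ℝ`
(the blow-up of `ℙ²` at four general points). -/
abbrev Idx5 : Type := Unit ⊕ Fin 4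

/-- The 5-dimensional real vector space. -/
abbrev V5 : Type := Idx5 → ℝ

noncomputable section

/-- The hyperplane class `H`. -/
def bH : V5 := fun k => if k = Sum.inl () then 1 else 0

/-- The exceptional class `E_i`. -/
def bE (i : Fin 4) : V5 := fun k => if k = Sum.inr i then 1 else 0

/-- The ten boundary classes `E_i` and `H − E_i − E_j` (`i ≠ j`). -/
def BoundaryClasses5 : Set V5 :=
  {v | (∃ i, v = bE i) ∨ (∃ i j, i ≠ j ∧ v = bH - bE i - bE j)}

/-- `v` is a nonnegative real linear combination of elements of `S`. -/
def IsNonnegCombi (S : Set V5) (v : V5) : Prop :=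
  ∃ (n : ℕ) (c : Fin n → ℝ) (g : Fin n → V5),
    (∀ t, 0 ≤ c t) ∧ (∀ t, g t ∈ S) ∧ v = ∑ t, c t • g t

/-- **Theorem 1.3 (n = 5), numerical core.** If `mᵢ ≥ 0` for all `i` and
`d ≥ mᵢ + mⱼ` for all `i ≠ j`, then `d·H − Σᵢ mᵢ Eᵢ` is a nonnegative linear
combination of the ten boundary classes of `M̄₀,₅`. -/
theorem effective_of_boundary_ineqs_M05
    (d : ℝ) (m : Fin 4 → ℝ)
    (hm : ∀ i, 0 ≤ m i)
    (hd : ∀ i j, i ≠ j → m i + m j ≤ d) :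
    IsNonnegCombi BoundaryClasses5 (d • bH - ∑ i, m i • bE i) := by
  have h02 := hd 0 2 (by decide)
  have h03 := hd 0 3 (by decide)
  have h12 := hd 1 2 (by decide)
  have h13 := hd 1 3 (by decide)
  have hm0 := hm 0
  have hm1 := hm 1
  have hm2 := hm 2
  have hm3 := hm 3
  set M : ℝ := max (m 2) (m 3) with hM
  have hM2 : m 2 ≤ M := le_max_left _ _
  have hM3 : m 3 ≤ M := le_max_right _ _
  have hMd0 : M + m 0 ≤ d := by
    rcases max_choice (m 2) (m 3) with h | h <;> rw [← hM] at h <;> linarith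
  have hMd1 : M + m 1 ≤ d := by
    rcases max_choice (m 2) (m 3) with h | h <;> rw [← hM] at h <;> linarith
  clear_value M
  refine ⟨6, ![d - M, M, d - M - m 0, d - M - m 1, M - m 2, M - m 3],
    ![bH - bE 0 - bE 1, bH - bE 2 - bE 3, bE 0, bE 1, bE 2, bE 3], ?_, ?_, ?_⟩
  · intro t
    fin_cases t
    · show (0:ℝ) ≤ d - M; linarith
    · show (0:ℝ) ≤ M; linarith
    · show (0:ℝ) ≤ d - M - m 0; linarith
    · show (0:ℝ) ≤ d - M - m 1; linarith
    · show (0:ℝ) ≤ M - m 2; linarith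
    · show (0:ℝ) ≤ M - m 3; linarith
  · intro t
    fin_cases t <;>
      simp only [Matrix.cons_val_zero, Matrix.cons_val_one, Matrix.head_cons,
        Matrix.cons_val_succ, BoundaryClasses5, Set.mem_setOf_eq]
    · exact Or.inr ⟨0, 1, by decide, rfl⟩
    · exact Or.inr ⟨2, 3, by decide, rfl⟩
    · exact Or.inl ⟨0, rfl⟩
    · exact Or.inl ⟨1, rfl⟩
    · exact Or.inl ⟨2, rfl⟩
    · exact Or.inl ⟨3, rfl⟩
  · funext k
    rcases k with _ | i
    · simp [Fin.sum_univ_succ, bH, bE]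
    · fin_cases i <;>
        simp (config := { decide := true }) [Fin.sum_univ_succ, bH, bE,
          show (Fin.succ 2 : Fin 4) = 3 from rfl, show (Fin.succ 1 : Fin 4) = 2 from rfl,
          show (Fin.succ 0 : Fin 4) = 1 from rfl] <;>
        ring1

end
end

section
/- Let v ∈ 𝔐 and let φ be a nonzero nef vector lying in cone(𝒞) with ⟨φ, v⟩ = 0. Then there exists a nef-minimal subset I ⊆ 𝒞 such that ⟨c, v⟩ = 0 for every c ∈ I, i.e. v ∈ F(I). (The key step in the proof of the paper's Proposition 4.8.) -/
open Finset

/-- `v` lies in `cone(S)`: it is a finite nonnegative real linear combination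
of elements of `S`. -/
def InCone {V : Type*} [AddCommGroup V] [Module ℝ V] (S : Set V) (v : V) : Prop :=
  ∃ (n : ℕ) (c : Fin n → ℝ) (g : Fin n → V),
    (∀ t, 0 ≤ c t) ∧ (∀ t, g t ∈ S) ∧ v = ∑ t, c t • g t

/-- A vector `φ` is nef (with respect to `𝒟`) if `⟨φ, D⟩ ≥ 0` for all `D ∈ 𝒟`. -/
def IsNefVec {V : Type*} [NormedAddCommGroup V] [InnerProductSpace ℝ V]
    (𝒟 : Finset V) (φ : V) : Prop :=
  ∀ D ∈ 𝒟, 0 ≤ (inner ℝ φ D : ℝ)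

/-- A subset `I ⊆ 𝒞` is nef-minimal if `cone(I)` contains a nonzero nef vector
and `cone(J)` contains no nonzero nef vector for any proper subset `J ⊊ I`. -/
def NefMinimal {V : Type*} [NormedAddCommGroup V] [InnerProductSpace ℝ V]
    (𝒟 𝒞 : Finset V) (I : Set V) : Prop :=
  I ⊆ (𝒞 : Set V) ∧
  (∃ φ : V, φ ≠ 0 ∧ IsNefVec 𝒟 φ ∧ InCone I φ) ∧
  ∀ J : Set V, J ⊂ I → ¬∃ φ : V, φ ≠ 0 ∧ IsNefVec 𝒟 φ ∧ InCone J φ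

/-!
Since `⟨c, v⟩ ≥ 0` on `𝒞`, the hyperplane `v^⊥` cuts a face out of `cone(𝒞)`, and a vector of
`cone(𝒞)` lying in `v^⊥` is a combination of generators in `v^⊥` only. Hence `φ` lies in the cone
of `I₀ = {c ∈ 𝒞 | ⟨c, v⟩ = 0}`, and any subset of the finite set `I₀` that is minimal for
containing a nonzero nef vector in its cone is nef-minimal.
-/

open scoped RealInnerProductSpace

theorem Set.Finite.exists_minimal_subset {α : Type*} {s : Set α} (hs : s.Finite)
    {P : Set α → Prop} (hP : P s) : ∃ t ⊆ s, P t ∧ ∀ u ⊂ t, ¬P u := by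
  have hfin : {t | t ⊆ s ∧ P t}.Finite := hs.finite_subsets.subset fun _ ht ↦ ht.1
  obtain ⟨t, -, ht⟩ := hfin.exists_le_minimal (a := s) ⟨subset_rfl, hP⟩
  refine ⟨t, ht.prop.1, ht.prop.2, fun u hut hu ↦ ?_⟩
  exact hut.not_subset (ht.le_of_le ⟨hut.subset.trans ht.prop.1, hu⟩ hut.subset)

theorem InCone.finset_sum {V ι : Type*} [AddCommGroup V] [Module ℝ V] {S : Set V}
    (s : Finset ι) {c : ι → ℝ} {g : ι → V} (hc : ∀ i ∈ s, 0 ≤ c i) (hg : ∀ i ∈ s, g i ∈ S) :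
    InCone S (∑ i ∈ s, c i • g i) := by
  refine ⟨#s, fun k ↦ c (s.equivFin.symm k), fun k ↦ g (s.equivFin.symm k),
    fun k ↦ hc _ (s.equivFin.symm k).2, fun k ↦ hg _ (s.equivFin.symm k).2, ?_⟩
  rw [← s.sum_coe_sort]
  exact (s.equivFin.symm.sum_comp fun i : s ↦ c i • g i).symm

theorem InCone.setOf_inner_eq_zero {V : Type*} [NormedAddCommGroup V] [InnerProductSpace ℝ V]
    {S : Set V} {v φ : V} (hS : ∀ c ∈ S, 0 ≤ ⟪c, v⟫) (hφ : InCone S φ) (hperp : ⟪φ, v⟫ = 0) :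
    InCone {c ∈ S | ⟪c, v⟫ = 0} φ := by
  classical
  obtain ⟨n, c, g, hc, hg, rfl⟩ := hφ
  have hterm_nonneg : ∀ t ∈ univ, 0 ≤ c t * ⟪g t, v⟫ :=
    fun t _ ↦ mul_nonneg (hc t) (hS _ (hg t))
  have hterm_zero : ∀ t ∈ univ, c t * ⟪g t, v⟫ = 0 := by
    refine (sum_eq_zero_iff_of_nonneg hterm_nonneg).mp ?_
    simpa only [sum_inner, real_inner_smul_left] using hperp
  have hsupport : ∀ t ∈ univ, c t • g t ≠ 0 → ⟪g t, v⟫ = 0 := fun t ht hne ↦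
    (mul_eq_zero.mp (hterm_zero t ht)).resolve_left fun h ↦ hne (by simp [h])
  rw [← sum_filter_of_ne hsupport]
  exact InCone.finset_sum _ (fun t _ ↦ hc t) fun t ht ↦ ⟨hg t, (mem_filter.mp ht).2⟩

theorem exists_nefMinimal_vanishing_general
    {V : Type*} [NormedAddCommGroup V] [InnerProductSpace ℝ V]
    (𝒟 𝒞 : Finset V)
    (v : V) (hv : ∀ c ∈ 𝒞, 0 ≤ (inner ℝ c v : ℝ))
    (φ : V) (hφ : φ ≠ 0) (hnef : IsNefVec 𝒟 φ) (hcone : InCone (𝒞 : Set V) φ)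
    (hperp : (inner ℝ φ v : ℝ) = 0) :
    ∃ I : Set V, NefMinimal 𝒟 𝒞 I ∧ ∀ c ∈ I, (inner ℝ c v : ℝ) = 0 := by
  set I₀ : Set V := {c ∈ (𝒞 : Set V) | ⟪c, v⟫ = 0}
  have hI₀ : I₀.Finite := 𝒞.finite_toSet.subset fun _ hc ↦ hc.1
  obtain ⟨I, hII₀, hI, hmin⟩ := hI₀.exists_minimal_subset
    (P := fun J ↦ ∃ ψ : V, ψ ≠ 0 ∧ IsNefVec 𝒟 ψ ∧ InCone J ψ)
    ⟨φ, hφ, hnef, hcone.setOf_inner_eq_zero hv hperp⟩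
  exact ⟨I, ⟨fun c hc ↦ (hII₀ hc).1, hI, hmin⟩, fun c hc ↦ (hII₀ hc).2⟩

/-- **Key step in the proof of Proposition 4.8.**  Let `v ∈ 𝔐` and let `φ` be a
nonzero nef vector lying in `cone(𝒞)` with `⟨φ, v⟩ = 0`.  Then there is a
nef-minimal subset `I ⊆ 𝒞` with `⟨c, v⟩ = 0` for every `c ∈ I`, i.e. `v ∈ F(I)`. -/
theorem exists_nefMinimal_vanishing
    {V : Type*} [NormedAddCommGroup V] [InnerProductSpace ℝ V]
    [FiniteDimensional ℝ V]
    (𝒟 𝒞 : Finset V)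
    (v : V) (hv : ∀ c ∈ 𝒞, 0 ≤ (inner ℝ c v : ℝ))
    (φ : V) (hφ : φ ≠ 0) (hnef : IsNefVec 𝒟 φ) (hcone : InCone (𝒞 : Set V) φ)
    (hperp : (inner ℝ φ v : ℝ) = 0) :
    ∃ I : Set V, NefMinimal 𝒟 𝒞 I ∧ ∀ c ∈ I, (inner ℝ c v : ℝ) = 0 :=
  exists_nefMinimal_vanishing_general 𝒟 𝒞 v hv φ hφ hnef hcone hperp
end

section
/- Let I ⊆ 𝒞 and c ∈ 𝒞. Then c ∈ I(F(I)) if and only if −c ∈ cone(𝒞 ∪ (−I)), where −I = {−α : α ∈ I}. (The remark following Definition 4.6 in the paper.) -/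
open Finset

/-- `𝔐 = {v : ⟨c, v⟩ ≥ 0 for all c ∈ 𝒞}`. -/
def Mcone {V : Type*} [NormedAddCommGroup V] [InnerProductSpace ℝ V]
    (𝒞 : Finset V) : Set V :=
  {v | ∀ c ∈ 𝒞, 0 ≤ (inner ℝ c v : ℝ)}

/-- `F(T) = {v ∈ 𝔐 : ⟨t, v⟩ = 0 for all t ∈ T}`. -/
def faceOfSet {V : Type*} [NormedAddCommGroup V] [InnerProductSpace ℝ V]
    (𝒞 : Finset V) (T : Set V) : Set V :=
  {v ∈ Mcone 𝒞 | ∀ t ∈ T, (inner ℝ t v : ℝ) = 0}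

/-- `I(F(T)) = {c' ∈ 𝒞 : ⟨c', v⟩ = 0 for all v ∈ F(T)}`. -/
def IofF {V : Type*} [NormedAddCommGroup V] [InnerProductSpace ℝ V]
    (𝒞 : Finset V) (T : Set V) : Set V :=
  {c | c ∈ 𝒞 ∧ ∀ v ∈ faceOfSet 𝒞 T, (inner ℝ c v : ℝ) = 0}

/-!
Write `S = 𝒞 ∪ (−I)`. Since `I ⊆ 𝒞`, a vector lies in `F(I)` exactly when it pairs nonnegatively
with every element of `S`, and for such `v` and `c ∈ 𝒞` we have `⟨c, v⟩ = 0` iff `⟨−c, v⟩ ≥ 0`.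
So `c ∈ I(F(I))` says that `−c` lies in the double dual of `S`, which is `cone(S)` by Farkas'
lemma. Farkas' lemma needs `cone(S)` to be closed: by the conic Carathéodory theorem `cone(S)` is
the finite union of the cones on the linearly independent subsets of `S`, and each of these is
the image of the closed nonnegative orthant under an injective linear map.
-/

open Set PointedCone ProperCone
open scoped RealInnerProductSpace

theorem inCone_iff_mem_hull {V : Type*} [AddCommGroup V] [Module ℝ V] {S : Set V} {v : V} :
    InCone S v ↔ v ∈ hull ℝ S := by
  rw [Submodule.mem_span_set']
  constructor
  · rintro ⟨n, c, g, hc, hg, rfl⟩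
    exact ⟨n, fun t => ⟨c t, hc t⟩, fun t => ⟨g t, hg t⟩, by simp [Nonneg.mk_smul]⟩
  · rintro ⟨n, c, g, rfl⟩
    exact ⟨n, fun t => c t, fun t => g t, fun t => (c t).2, fun t => (g t).2, by
      simp [Nonneg.coe_smul]⟩

section Caratheodory

variable {𝕜 E : Type*} [Field 𝕜] [LinearOrder 𝕜] [IsStrictOrderedRing 𝕜]
  [AddCommGroup E] [Module 𝕜 E]

theorem Finset.exists_div_mul_le {ι : Type*} {s : Finset ι} {c d : ι → 𝕜}
    (hc : ∀ i ∈ s, 0 ≤ c i) (hd : ∃ i ∈ s, 0 < d i) :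
    ∃ a ∈ s, 0 < d a ∧ ∀ i ∈ s, c a / d a * d i ≤ c i := by
  classical
  obtain ⟨i, hi, hdi⟩ := hd
  obtain ⟨a, ha, hmin⟩ := {j ∈ s | 0 < d j}.exists_min_image (fun j => c j / d j)
    ⟨i, mem_filter.2 ⟨hi, hdi⟩⟩
  obtain ⟨has, hda⟩ := mem_filter.1 ha
  refine ⟨a, has, hda, fun j hj => ?_⟩
  rcases lt_or_ge 0 (d j) with hdj | hdj
  · calc c a / d a * d j ≤ c j / d j * d j :=
          mul_le_mul_of_nonneg_right (hmin j (mem_filter.2 ⟨hj, hdj⟩)) hdj.le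
      _ = c j := div_mul_cancel₀ _ hdj.ne'
  · exact (mul_nonpos_of_nonneg_of_nonpos (div_nonneg (hc a has) hda.le) hdj).trans (hc j hj)

theorem PointedCone.mem_hull_finset_iff {s : Finset E} {x : E} :
    x ∈ hull 𝕜 (s : Set E) ↔ ∃ c : E → 𝕜, (∀ a ∈ s, 0 ≤ c a) ∧ ∑ a ∈ s, c a • a = x := by
  constructor
  · intro hx
    obtain ⟨c, -, rfl⟩ := Submodule.mem_span_finset.1 hx
    exact ⟨fun a => c a, fun a _ => (c a).2, by simp [Nonneg.coe_smul]⟩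
  · rintro ⟨c, hc, rfl⟩
    refine Submodule.sum_mem _ fun a ha => ?_
    rw [← Nonneg.mk_smul _ (hc a ha)]
    exact Submodule.smul_mem _ _ (Submodule.subset_span ha)

theorem PointedCone.exists_mem_hull_erase_of_not_linearIndepOn [DecidableEq E] {s : Finset E}
    {x : E} (hx : x ∈ hull 𝕜 (s : Set E)) (hs : ¬LinearIndepOn 𝕜 id (s : Set E)) :
    ∃ a ∈ s, x ∈ hull 𝕜 (s.erase a : Set E) := by
  obtain ⟨c, hc, rfl⟩ := mem_hull_finset_iff.1 hx
  obtain ⟨d, hd, hpos⟩ : ∃ d : E → 𝕜, ∑ i ∈ s, d i • i = 0 ∧ ∃ i ∈ s, 0 < d i := by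
    obtain ⟨d, hd, i, hi, hdi⟩ := not_linearIndepOn_finset_iff.1 hs
    rcases hdi.lt_or_gt with hneg | hpos
    · exact ⟨-d, by simpa [neg_smul, sum_neg_distrib] using hd, i, hi, neg_pos.2 hneg⟩
    · exact ⟨d, by simpa using hd, i, hi, hpos⟩
  obtain ⟨a, ha, hda, hle⟩ := exists_div_mul_le hc hpos
  -- Moving along the relation `d` by the largest admissible step kills the coefficient at `a`.
  set r := c a / d a
  refine ⟨a, ha, mem_hull_finset_iff.2
    ⟨fun i => c i - r * d i, fun i hi => sub_nonneg.2 (hle i (mem_of_mem_erase hi)), ?_⟩⟩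
  calc ∑ i ∈ s.erase a, (c i - r * d i) • i = ∑ i ∈ s, (c i - r * d i) • i :=
        sum_erase s (by simp [r, div_mul_cancel₀ _ hda.ne'])
    _ = ∑ i ∈ s, c i • i := by
        simp only [sub_smul, mul_smul, sum_sub_distrib, ← smul_sum, hd, smul_zero, sub_zero]

theorem PointedCone.exists_linearIndepOn_of_mem_hull {s : Finset E} {x : E}
    (hx : x ∈ hull 𝕜 (s : Set E)) :
    ∃ t ⊆ s, LinearIndepOn 𝕜 id (t : Set E) ∧ x ∈ hull 𝕜 (t : Set E) := by
  classical
  induction s using Finset.strongInduction with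
  | H s ih =>
    by_cases hs : LinearIndepOn 𝕜 id (s : Set E)
    · exact ⟨s, subset_rfl, hs, hx⟩
    · obtain ⟨a, ha, hxa⟩ := exists_mem_hull_erase_of_not_linearIndepOn hx hs
      obtain ⟨t, hts, ht, hxt⟩ := ih _ (erase_ssubset ha) hxa
      exact ⟨t, hts.trans (erase_subset a s), ht, hxt⟩

end Caratheodory

section Closed

variable {E : Type*} [AddCommGroup E] [Module ℝ E] [TopologicalSpace E] [IsTopologicalAddGroup E]
  [ContinuousSMul ℝ E] [T2Space E]

theorem LinearIndependent.isClosed_hull_range {ι : Type*} [Fintype ι] {v : ι → E}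
    (hv : LinearIndependent ℝ v) : IsClosed (hull ℝ (range v) : Set E) := by
  let L := Fintype.linearCombination ℝ v
  have hL : (hull ℝ (range v) : Set E) = L '' Ici 0 := by
    ext x
    simp only [SetLike.mem_coe, Submodule.mem_span_range_iff_exists_fun, mem_image, Set.mem_Ici, L,
      Fintype.linearCombination_apply]
    constructor
    · rintro ⟨c, rfl⟩
      exact ⟨fun i => c i, fun i => (c i).2, by simp [Nonneg.coe_smul]⟩
    · rintro ⟨c, hc, rfl⟩
      exact ⟨fun i => ⟨c i, hc i⟩, by simp [Nonneg.mk_smul]⟩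
  rw [hL]
  exact (L.isClosedEmbedding_of_injective (LinearMap.ker_eq_bot.2
    (linearIndependent_iff_injective_fintypeLinearCombination.1 hv))).isClosedMap _ isClosed_Ici

theorem Set.Finite.isClosed_hull {s : Set E} (hs : s.Finite) : IsClosed (hull ℝ s : Set E) := by
  classical
  lift s to Finset E using hs
  have hunion : (hull ℝ (s : Set E) : Set E) =
      ⋃ t ∈ s.powerset.filter (fun t : Finset E => LinearIndepOn ℝ id (t : Set E)),
        hull ℝ (t : Set E) := by
    ext x
    simp only [SetLike.mem_coe, mem_iUnion, Finset.mem_filter, Finset.mem_powerset, exists_prop]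
    constructor
    · intro hx
      obtain ⟨t, hts, ht, hxt⟩ := exists_linearIndepOn_of_mem_hull hx
      exact ⟨t, ⟨hts, ht⟩, hxt⟩
    · rintro ⟨t, ⟨hts, -⟩, hxt⟩
      exact Submodule.span_mono (by simpa using hts) hxt
  rw [hunion]
  refine isClosed_biUnion_finset fun t ht => ?_
  simpa using (mem_filter.1 ht).2.linearIndependent.isClosed_hull_range

end Closed

theorem ProperCone.innerDual_innerDual_of_finite {E : Type*} [NormedAddCommGroup E]
    [InnerProductSpace ℝ E] [CompleteSpace E] {s : Set E} (hs : s.Finite) :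
    (innerDual (innerDual s : Set E) : Set E) = hull ℝ s := by
  let C : ProperCone ℝ E := ⟨hull ℝ s, hs.isClosed_hull⟩
  have hC : innerDual (C : Set E) = innerDual s := by
    ext y
    exact SetLike.ext_iff.1 (dual_hull (p := innerₗ E) s) y
  rw [← hC, innerDual_innerDual]
  rfl

theorem mem_faceOfSet_iff_forall_inner_nonneg {V : Type*} [NormedAddCommGroup V]
    [InnerProductSpace ℝ V] {𝒞 : Finset V} {I : Set V} (hI : I ⊆ (𝒞 : Set V)) {v : V} :
    v ∈ faceOfSet 𝒞 I ↔ ∀ x ∈ (𝒞 : Set V) ∪ (fun α : V => -α) '' I, 0 ≤ ⟪x, v⟫ := by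
  simp only [Set.mem_union, or_imp, forall_and, Set.forall_mem_image, inner_neg_left, neg_nonneg]
  refine and_congr_right fun hv => forall₂_congr fun α hα => ?_
  exact ⟨le_of_eq, fun h => le_antisymm h (hv α (hI hα))⟩

/-- **The remark following Definition 4.6.**  For `I ⊆ 𝒞` and `c ∈ 𝒞`,
`c ∈ I(F(I))` if and only if `−c ∈ cone(𝒞 ∪ (−I))`. -/
theorem mem_IofF_iff_neg_inCone
    {V : Type*} [NormedAddCommGroup V] [InnerProductSpace ℝ V]
    [FiniteDimensional ℝ V]
    (𝒞 : Finset V) (I : Set V) (hI : I ⊆ (𝒞 : Set V))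
    (c : V) (hc : c ∈ 𝒞) :
    c ∈ IofF 𝒞 I ↔ InCone ((𝒞 : Set V) ∪ (fun α : V => -α) '' I) (-c) := by
  have hS : ((𝒞 : Set V) ∪ (fun α : V => -α) '' I).Finite :=
    𝒞.finite_toSet.union ((𝒞.finite_toSet.subset hI).image _)
  rw [inCone_iff_mem_hull, ← SetLike.mem_coe, ← innerDual_innerDual_of_finite hS,
    SetLike.mem_coe, mem_innerDual]
  simp only [IofF, Set.mem_ofPred_eq, hc, true_and, SetLike.mem_coe, mem_innerDual,
    ← mem_faceOfSet_iff_forall_inner_nonneg hI, inner_neg_right, real_inner_comm c, neg_nonneg]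
  exact forall₂_congr fun y hy => ⟨le_of_eq, fun h => le_antisymm h (hy.1 c hc)⟩
end

section
/- The nef-minimal subsets of the set of ten boundary classes are exactly: the twelve pairs {E_i, H − E_i − E_j} with i ≠ j, and the three pairs {H − E_i − E_j, H − E_k − E_l} with {i,j,k,l} = {0,1,2,3}. Moreover, each pair of the first kind sums to the nef vector H − E_j, and each pair of the second kind sums to the nef vector 2H − E_0 − E_1 − E_2 − E_3. (The classification of nef-minimal subsets in the paper's Example 4.10 for M̄_{0,5}.) -/
open Finset

noncomputable section

/-- The intersection form: `⟨H,H⟩ = 1`, `⟨E_i,E_i⟩ = −1`, all other pairs of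
basis vectors pairing to `0`. -/
def interForm (u v : V5) : ℝ :=
  u (Sum.inl ()) * v (Sum.inl ()) - ∑ i : Fin 4, u (Sum.inr i) * v (Sum.inr i)

/-- A vector `φ` is nef if it pairs nonnegatively with each boundary class. -/
def IsNef5 (φ : V5) : Prop := ∀ B ∈ BoundaryClasses5, 0 ≤ interForm φ B

/-- A subset `I` of the set of boundary classes is nef-minimal if some nonzero
nef vector is a nonnegative linear combination of elements of `I`, and no
proper subset of `I` has this property. -/
def NefMinimal5 (I : Set V5) : Prop :=
  I ⊆ BoundaryClasses5 ∧
  (∃ φ : V5, φ ≠ 0 ∧ IsNef5 φ ∧ IsNonnegCombi I φ) ∧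
  ∀ J : Set V5, J ⊂ I → ¬∃ φ : V5, φ ≠ 0 ∧ IsNef5 φ ∧ IsNonnegCombi J φ

/-! The boundary classes are (-1)-curves, and two distinct ones meet in `0` or `1` point; the pairs
meeting in a point are exactly the fifteen pairs of the classification, the edges of the
Petersen graph (`IsPetersenEdge`). If a nonzero nef class `φ = ∑ c_t B_t` has `c_{t₀} > 0`, then
`0 ≤ ⟨φ, B_{t₀}⟩` forces some other `B_t` to meet `B_{t₀}`, since `B_{t₀}` itself contributes
`-c_{t₀}`. So every set carrying a nonzero nef class contains such a pair, and every such pair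
carries one (its sum); minimality then says that `I` is the pair. -/

lemma Set.eq_of_mem_of_ssubset_pair {α : Type*} {x y a b : α} {J : Set α} (hJ : J ⊂ {x, y})
    (ha : a ∈ J) (hb : b ∈ J) : a = b := by
  by_contra hab
  refine hJ.not_subset ?_
  obtain rfl | rfl := hJ.subset ha <;> obtain rfl | rfl := hJ.subset hb <;>
    simp_all [Set.insert_subset_iff]

lemma interForm_sum_smul_left {ι : Type*} [Fintype ι] (c : ι → ℝ) (g : ι → V5) (B : V5) :
    interForm (∑ t, c t • g t) B = ∑ t, c t * interForm (g t) B := by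
  simp only [interForm, Finset.sum_apply, Pi.smul_apply, smul_eq_mul, Finset.sum_mul,
    Finset.mul_sum, mul_sub, Finset.sum_sub_distrib]
  rw [Finset.sum_comm (γ := Fin 4)]
  simp only [mul_assoc]

lemma interForm_comm (u v : V5) : interForm u v = interForm v u := by
  simp only [interForm, mul_comm]

lemma interForm_bE_right (φ : V5) (m : Fin 4) : interForm φ (bE m) = -φ (Sum.inr m) := by
  simp [interForm, bE, mul_ite]

lemma interForm_bH_sub_bE_sub_bE_right (φ : V5) (a b : Fin 4) :
    interForm φ (bH - bE a - bE b) = φ (Sum.inl ()) + φ (Sum.inr a) + φ (Sum.inr b) := by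
  simp [interForm, bH, bE, mul_sub, mul_ite, Finset.sum_sub_distrib]
  ring

lemma bE_apply_inr (i m : Fin 4) : bE i (Sum.inr m) = if i = m then 1 else 0 := by
  simp [bE, eq_comm]

@[simp] lemma bE_apply_inl (i : Fin 4) : bE i (Sum.inl ()) = 0 := by simp [bE]

@[simp] lemma bH_apply_inl : bH (Sum.inl ()) = 1 := by simp [bH]

@[simp] lemma bH_apply_inr (m : Fin 4) : bH (Sum.inr m) = 0 := by simp [bH]

lemma interForm_self_of_mem_boundaryClasses5 {B : V5} (hB : B ∈ BoundaryClasses5) :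
    interForm B B = -1 := by
  rcases hB with ⟨i, rfl⟩ | ⟨i, j, hij, rfl⟩
  · simp [interForm_bE_right, bE_apply_inr]
  · simp [interForm_bH_sub_bE_sub_bE_right, bE_apply_inr, hij, hij.symm]

lemma fin4_insert_eq_univ_iff (i j k l : Fin 4) :
    ({i, j, k, l} : Finset (Fin 4)) = Finset.univ ↔
      i ≠ j ∧ i ≠ k ∧ i ≠ l ∧ j ≠ k ∧ j ≠ l ∧ k ≠ l := by
  revert i j k l
  decide

def IsPetersenEdge (I : Set V5) : Prop :=
  (∃ i j : Fin 4, i ≠ j ∧ I = {bE i, bH - bE i - bE j}) ∨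
    (∃ i j k l : Fin 4, ({i, j, k, l} : Finset (Fin 4)) = univ ∧
      I = {bH - bE i - bE j, bH - bE k - bE l})

lemma bE_add_bH_sub_bE_sub_bE (i j : Fin 4) : bE i + (bH - bE i - bE j) = bH - bE j := by
  abel

lemma bH_sub_bE_sub_bE_add_bH_sub_bE_sub_bE {i j k l : Fin 4}
    (h : ({i, j, k, l} : Finset (Fin 4)) = univ) :
    (bH - bE i - bE j) + (bH - bE k - bE l) = (2 : ℝ) • bH - ∑ a, bE a := by
  obtain ⟨hij, hik, hil, hjk, hjl, hkl⟩ := (fin4_insert_eq_univ_iff i j k l).1 h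
  rw [← h, Finset.sum_insert (by simp [hij, hik, hil]), Finset.sum_insert (by simp [hjk, hjl]),
    Finset.sum_pair hkl, two_smul]
  abel

lemma isNef5_bH_sub_bE (j : Fin 4) : IsNef5 (bH - bE j) := by
  rintro B (⟨m, rfl⟩ | ⟨a, b, hab, rfl⟩)
  · simp only [interForm_bE_right, Pi.sub_apply, bH_apply_inr, bE_apply_inr]
    split_ifs <;> norm_num
  · simp only [interForm_bH_sub_bE_sub_bE_right, Pi.sub_apply, bH_apply_inl, bH_apply_inr,
      bE_apply_inl, bE_apply_inr]
    split_ifs <;> simp_all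

lemma isNef5_two_smul_bH_sub_sum_bE : IsNef5 ((2 : ℝ) • bH - ∑ a, bE a) := by
  rintro B (⟨m, rfl⟩ | ⟨a, b, -, rfl⟩) <;>
    simp [interForm_bE_right, interForm_bH_sub_bE_sub_bE_right, Finset.sum_apply, bE_apply_inr]
  norm_num

lemma isNonnegCombi_pair_add (A B : V5) : IsNonnegCombi {A, B} (A + B) :=
  ⟨2, fun _ => 1, ![A, B], fun _ => zero_le_one,
    fun t => by fin_cases t <;> simp, by simp [Fin.sum_univ_two]⟩

lemma IsPetersenEdge.subset_boundaryClasses5 {I : Set V5} (hI : IsPetersenEdge I) :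
    I ⊆ BoundaryClasses5 := by
  rcases hI with ⟨i, j, hij, rfl⟩ | ⟨i, j, k, l, h, rfl⟩
  · rintro x (rfl | rfl)
    exacts [Or.inl ⟨i, rfl⟩, Or.inr ⟨i, j, hij, rfl⟩]
  · obtain ⟨hij, -, -, -, -, hkl⟩ := (fin4_insert_eq_univ_iff i j k l).1 h
    rintro x (rfl | rfl)
    exacts [Or.inr ⟨i, j, hij, rfl⟩, Or.inr ⟨k, l, hkl, rfl⟩]

lemma IsPetersenEdge.exists_nef {I : Set V5} (hI : IsPetersenEdge I) :
    ∃ φ : V5, φ ≠ 0 ∧ IsNef5 φ ∧ IsNonnegCombi I φ := by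
  have ne_zero_of_inl {φ : V5} (h : φ (Sum.inl ()) ≠ 0) : φ ≠ 0 := fun h0 => h (by simp [h0])
  rcases hI with ⟨i, j, -, rfl⟩ | ⟨i, j, k, l, h, rfl⟩
  · refine ⟨_, ne_zero_of_inl (by simp), isNef5_bH_sub_bE j, ?_⟩
    simpa only [bE_add_bH_sub_bE_sub_bE] using isNonnegCombi_pair_add (bE i) (bH - bE i - bE j)
  · refine ⟨_, ne_zero_of_inl (by simp [Finset.sum_apply]), isNef5_two_smul_bH_sub_sum_bE, ?_⟩
    simpa only [bH_sub_bE_sub_bE_add_bH_sub_bE_sub_bE h] using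
      isNonnegCombi_pair_add (bH - bE i - bE j) (bH - bE k - bE l)

lemma exists_interForm_pos_of_isNef5 {S : Set V5} (hS : S ⊆ BoundaryClasses5) {φ : V5}
    (hφ0 : φ ≠ 0) (hφ : IsNef5 φ) (hcomb : IsNonnegCombi S φ) :
    ∃ A ∈ S, ∃ B ∈ S, A ≠ B ∧ 0 < interForm A B := by
  obtain ⟨n, c, g, hc, hg, rfl⟩ := hcomb
  obtain ⟨t₀, ht₀⟩ : ∃ t, 0 < c t := by
    by_contra! h
    exact hφ0 (by simp [fun t => le_antisymm (h t) (hc t)])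
  by_contra! hmeet
  have hterm (t : Fin n) : c t * interForm (g t) (g t₀) ≤ 0 := by
    refine mul_nonpos_of_nonneg_of_nonpos (hc t) ?_
    by_cases ht : g t = g t₀
    · rw [ht, interForm_self_of_mem_boundaryClasses5 (hS (hg t₀))]
      norm_num
    · exact hmeet _ (hg t) _ (hg t₀) ht
  have hneg : interForm (∑ t, c t • g t) (g t₀) < 0 := by
    rw [interForm_sum_smul_left, ← Finset.sum_const_zero (s := (univ : Finset (Fin n)))]
    refine Finset.sum_lt_sum (fun t _ => hterm t) ⟨t₀, mem_univ _, ?_⟩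
    rw [interForm_self_of_mem_boundaryClasses5 (hS (hg t₀))]
    linarith
  exact hneg.not_ge (hφ _ (hS (hg t₀)))

lemma isPetersenEdge_pair_of_interForm_bE_pos {m a b : Fin 4} (hab : a ≠ b)
    (h : 0 < interForm (bE m) (bH - bE a - bE b)) :
    IsPetersenEdge {bE m, bH - bE a - bE b} := by
  simp only [interForm_bH_sub_bE_sub_bE_right, bE_apply_inl, bE_apply_inr] at h
  by_cases hma : m = a
  · exact Or.inl ⟨a, b, hab, by rw [hma]⟩
  by_cases hmb : m = b
  · exact Or.inl ⟨b, a, hab.symm, by rw [hmb, sub_right_comm]⟩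
  simp [hma, hmb] at h

lemma isPetersenEdge_pair_of_interForm_pos {A B : V5} (hA : A ∈ BoundaryClasses5)
    (hB : B ∈ BoundaryClasses5) (h : 0 < interForm A B) : IsPetersenEdge {A, B} := by
  rcases hA with ⟨i, rfl⟩ | ⟨a, b, hab, rfl⟩ <;> rcases hB with ⟨m, rfl⟩ | ⟨p, q, hpq, rfl⟩
  · simp only [interForm_bE_right, bE_apply_inr] at h
    split_ifs at h <;> norm_num at h
  · exact isPetersenEdge_pair_of_interForm_bE_pos hpq h
  · rw [Set.pair_comm]
    exact isPetersenEdge_pair_of_interForm_bE_pos hab (interForm_comm _ _ ▸ h)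
  · refine Or.inr ⟨a, b, p, q, ?_, rfl⟩
    simp only [interForm_bH_sub_bE_sub_bE_right, Pi.sub_apply, bH_apply_inl, bH_apply_inr,
      bE_apply_inr] at h
    refine (fin4_insert_eq_univ_iff a b p q).2 ⟨hab, ?_, ?_, ?_, ?_, hpq⟩ <;>
      rintro rfl <;> split_ifs at h <;> simp_all <;> linarith

lemma nefMinimal5_of_isPetersenEdge {I : Set V5} (hI : IsPetersenEdge I) : NefMinimal5 I := by
  refine ⟨hI.subset_boundaryClasses5, hI.exists_nef, fun J hJI ⟨φ, hφ0, hφ, hcomb⟩ => ?_⟩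
  obtain ⟨A, hA, B, hB, hAB, -⟩ :=
    exists_interForm_pos_of_isNef5 (hJI.subset.trans hI.subset_boundaryClasses5) hφ0 hφ hcomb
  rcases hI with ⟨i, j, -, rfl⟩ | ⟨i, j, k, l, -, rfl⟩ <;>
    exact hAB (Set.eq_of_mem_of_ssubset_pair hJI hA hB)

lemma isPetersenEdge_of_nefMinimal5 {I : Set V5} (hI : NefMinimal5 I) : IsPetersenEdge I := by
  obtain ⟨hIB, ⟨φ, hφ0, hφ, hcomb⟩, hmin⟩ := hI
  obtain ⟨A, hA, B, hB, hAB, hpos⟩ := exists_interForm_pos_of_isNef5 hIB hφ0 hφ hcomb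
  have hedge := isPetersenEdge_pair_of_interForm_pos (hIB hA) (hIB hB) hpos
  have hsub : ({A, B} : Set V5) ⊆ I := Set.insert_subset hA (Set.singleton_subset_iff.2 hB)
  obtain rfl : ({A, B} : Set V5) = I := by
    by_contra hne
    exact hmin _ (hsub.ssubset_of_ne hne) hedge.exists_nef
  exact hedge

/-- **Example 4.10 (classification of nef-minimal subsets for `M̄₀,₅`).**
The nef-minimal subsets of the ten boundary classes are exactly the twelve
pairs `{E_i, H − E_i − E_j}` (`i ≠ j`) and the three pairs
`{H − E_i − E_j, H − E_k − E_l}` (`{i,j,k,l} = {0,1,2,3}`).  Moreover each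
pair of the first kind sums to the nef vector `H − E_j`, and each pair of the
second kind sums to the nef vector `2H − E_0 − E_1 − E_2 − E_3`. -/
theorem nefMinimal_classification_M05 :
    (∀ I : Set V5, NefMinimal5 I ↔
      ((∃ i j : Fin 4, i ≠ j ∧ I = {bE i, bH - bE i - bE j}) ∨
        (∃ i j k l : Fin 4, ({i, j, k, l} : Finset (Fin 4)) = univ ∧
          I = {bH - bE i - bE j, bH - bE k - bE l}))) ∧
    (∀ i j : Fin 4, i ≠ j →
      bE i + (bH - bE i - bE j) = bH - bE j ∧ IsNef5 (bH - bE j)) ∧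
    (∀ i j k l : Fin 4, ({i, j, k, l} : Finset (Fin 4)) = univ →
      (bH - bE i - bE j) + (bH - bE k - bE l) = (2 : ℝ) • bH - ∑ a, bE a ∧
        IsNef5 ((2 : ℝ) • bH - ∑ a, bE a)) :=
  ⟨fun _ => ⟨isPetersenEdge_of_nefMinimal5, nefMinimal5_of_isPetersenEdge⟩,
    fun i j _ => ⟨bE_add_bH_sub_bE_sub_bE i j, isNef5_bH_sub_bE j⟩,
    fun _ _ _ _ h => ⟨bH_sub_bE_sub_bE_add_bH_sub_bE_sub_bE h, isNef5_two_smul_bH_sub_sum_bE⟩⟩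

end
end
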